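/- arXiv:2412.00212 — 2 statements merged into one kernel-verified Lean document; each statement's English description precedes it below -/
import Mathlib

section
/- Maximum construction cost of the disjoint union of regular graphs of distinct degrees: if G_1 is an r_1-regular finite simple graph with p_1 vertices and q_1 edges, G_2 is an r_2-regular finite simple graph with p_2 vertices and q_2 edges, and r_1 > r_2, then ν*(G_1 ⊔ G_2) = ν*(G_1) + ν*(G_2) + 2·q_1·(p_2 + q_2), where G_1 ⊔ G_2 is the disjoint union. -/
/-!
Writing `f v = x⁻¹ v` for the vertex positions of a construction sequence `x`, summing the
edge costs gives `ν(x) = 2 Σ_e x⁻¹ e - Σ_v deg v · f v`, and the positions of all elements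
add up to `0 + 1 + ⋯ + (p + q - 1)`. Hence `ν(x) + Σ_v (deg v + 2) f v` is the same for every
`x`, so `ν*` is attained by listing the vertices first, in an order minimising
`Σ_v (deg v + 2) f v` among all injective `f`, and the edges after them. For an `r`-regular
graph every order is optimal, since `Σ_v f v ≥ 0 + 1 + ⋯ + (p - 1)`; for `G₁ ⊔ G₂` with
`r₁ ≥ r₂` it is optimal to put the vertices of `G₁` first. Comparing the three closed forms
gives the formula.
-/

namespace ConsCost

variable {V : Type*} [Fintype V]

/-- The number of elements (vertices plus edges) of a graph. -/
noncomputable def numElts (G : SimpleGraph V) : ℕ :=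
  Fintype.card V + Nat.card G.edgeSet

/-- `x` is a construction sequence for `G`: a bijective listing of the vertices and
edges of `G` in which every edge appears after both of its endpoints. -/
def IsCSeq (G : SimpleGraph V) (x : Fin (numElts G) ≃ V ⊕ G.edgeSet) : Prop :=
  ∀ (e : G.edgeSet), ∀ v ∈ (e : Sym2 V), x.symm (Sum.inl v) < x.symm (Sum.inr e)

/-- The cost `ν(e,x) = (x⁻¹e − x⁻¹u) + (x⁻¹e − x⁻¹w)` of an edge `e = uw`
in the construction sequence `x`. -/
noncomputable def edgeCost (G : SimpleGraph V) (x : Fin (numElts G) ≃ V ⊕ G.edgeSet)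
    (e : G.edgeSet) : ℕ :=
  2 * (x.symm (Sum.inr e) : ℕ) -
    Sym2.lift ⟨fun u w => ((x.symm (Sum.inl u) : ℕ) + (x.symm (Sum.inl w) : ℕ)),
      fun u w => by dsimp only; omega⟩ (e : Sym2 V)

/-- The cost `ν(x)` of a construction sequence: the sum of the costs of all edges. -/
noncomputable def cost (G : SimpleGraph V) (x : Fin (numElts G) ≃ V ⊕ G.edgeSet) : ℕ :=
  ∑ᶠ e : G.edgeSet, edgeCost G x e

/-- The maximum construction cost `ν*(G)`. -/
noncomputable def maxCost (G : SimpleGraph V) : ℕ :=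
  sSup {c | ∃ x, IsCSeq G x ∧ cost G x = c}

/-- The minimum construction cost `ν_*(G)`. -/
noncomputable def minCost (G : SimpleGraph V) : ℕ :=
  sInf {c | ∃ x, IsCSeq G x ∧ cost G x = c}

open Finset Function SimpleGraph

lemma sum_range_id_add (a b : ℕ) :
    ∑ i ∈ range (a + b), i = ∑ i ∈ range a, i + ∑ i ∈ range b, i + a * b := by
  rw [sum_range_add, sum_add_distrib, sum_const, card_range, smul_eq_mul]
  ring

lemma sum_range_card_le_sum (s : Finset ℕ) : ∑ i ∈ range #s, i ≤ ∑ i ∈ s, i := by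
  induction s using Finset.induction_on_max with
  | empty => simp
  | insert a s hlt ih =>
    have ha : a ∉ s := fun h => (hlt a h).false
    have hcard : #s ≤ a := by
      simpa using card_le_card fun i hi => mem_range.2 (hlt i hi)
    rw [card_insert_of_notMem ha, sum_range_succ, sum_insert ha]
    omega

lemma sum_range_card_le_sum_of_injective {α : Type*} [Fintype α] {f : α → ℕ}
    (hf : Injective f) : ∑ i ∈ range (Fintype.card α), i ≤ ∑ a, f a := by
  classical
  simpa [card_image_of_injective _ hf, sum_image hf.injOn] using
    sum_range_card_le_sum (univ.image f)

lemma sum_val_equiv {α : Type*} [Fintype α] {n : ℕ} (σ : α ≃ Fin n) :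
    ∑ a, (σ a : ℕ) = ∑ i ∈ range n, i := by
  rw [Equiv.sum_comp σ (fun i => (i : ℕ)), Fin.sum_univ_eq_sum_range (fun i => i)]

noncomputable def endpointSum (G : SimpleGraph V) (f : V → ℕ) : ℕ :=
  ∑ᶠ e : G.edgeSet, Sym2.lift ⟨fun u w => f u + f w, fun _ _ => add_comm _ _⟩ (e : Sym2 V)

/-- `Σ_v (deg v + 2) f v`, written without degrees so that adjacency need not be decidable. -/
noncomputable def vertexLoad (G : SimpleGraph V) (f : V → ℕ) : ℕ :=
  endpointSum G f + 2 * ∑ v, f v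

section ConstructionSequence

variable {G : SimpleGraph V} {x : Fin (numElts G) ≃ V ⊕ G.edgeSet}

lemma IsCSeq.edgeCost_add (hx : IsCSeq G x) (e : G.edgeSet) :
    edgeCost G x e + Sym2.lift ⟨fun u w => (x.symm (.inl u) : ℕ) + x.symm (.inl w),
      fun _ _ => add_comm _ _⟩ (e : Sym2 V) = 2 * (x.symm (.inr e) : ℕ) := by
  obtain ⟨e', he'⟩ := e
  induction e' using Sym2.ind with
  | _ u w =>
    have hu := hx ⟨_, he'⟩ u (Sym2.mem_mk_left u w)
    have hw := hx ⟨_, he'⟩ w (Sym2.mem_mk_right u w)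
    rw [Fin.lt_def] at hu hw
    simp only [edgeCost, Sym2.lift_mk]
    omega

lemma IsCSeq.cost_add_endpointSum (hx : IsCSeq G x) :
    cost G x + endpointSum G (fun v => x.symm (.inl v)) =
      2 * ∑ᶠ e : G.edgeSet, (x.symm (.inr e) : ℕ) := by
  have := Fintype.ofFinite G.edgeSet
  simp only [cost, endpointSum, finsum_eq_sum_of_fintype, ← sum_add_distrib, mul_sum]
  exact sum_congr rfl fun e _ => hx.edgeCost_add e

lemma sum_vertex_add_sum_edge (x : Fin (numElts G) ≃ V ⊕ G.edgeSet) :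
    ∑ v, (x.symm (.inl v) : ℕ) + ∑ᶠ e : G.edgeSet, (x.symm (.inr e) : ℕ) =
      ∑ i ∈ range (numElts G), i := by
  have := Fintype.ofFinite G.edgeSet
  rw [finsum_eq_sum_of_fintype, ← Fintype.sum_sum_type (fun a => (x.symm a : ℕ))]
  exact sum_val_equiv x.symm

lemma IsCSeq.cost_add_vertexLoad (hx : IsCSeq G x) :
    cost G x + vertexLoad G (fun v => x.symm (.inl v)) = 2 * ∑ i ∈ range (numElts G), i := by
  rw [vertexLoad, ← sum_vertex_add_sum_edge x, ← add_assoc, hx.cost_add_endpointSum]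
  ring

lemma exists_isCSeq_vertex_eq (σ : V ≃ Fin (Fintype.card V)) :
    ∃ x : Fin (numElts G) ≃ V ⊕ G.edgeSet, IsCSeq G x ∧ ∀ v, (x.symm (.inl v) : ℕ) = σ v := by
  let y : V ⊕ G.edgeSet ≃ Fin (numElts G) :=
    (σ.sumCongr (Finite.equivFin G.edgeSet)).trans finSumFinEquiv
  have hy_inl (v : V) : (y (.inl v) : ℕ) = σ v := rfl
  have hy_inr (e : G.edgeSet) : (y (.inr e) : ℕ) = Fintype.card V + Finite.equivFin _ e := rfl
  refine ⟨y.symm, fun e v _ => ?_, fun v => ?_⟩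
  · rw [Equiv.symm_symm, Fin.lt_def, hy_inl, hy_inr]
    omega
  · rw [Equiv.symm_symm, hy_inl]

theorem maxCost_add_vertexLoad_eq (σ : V ≃ Fin (Fintype.card V))
    (hσ : ∀ f : V → ℕ, Injective f → vertexLoad G (fun v => σ v) ≤ vertexLoad G f) :
    maxCost G + vertexLoad G (fun v => σ v) = 2 * ∑ i ∈ range (numElts G), i := by
  obtain ⟨x₀, hx₀, hx₀σ⟩ := exists_isCSeq_vertex_eq (G := G) σ
  have hx₀cost := hx₀.cost_add_vertexLoad
  simp only [hx₀σ] at hx₀cost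
  have hgreatest : IsGreatest {c | ∃ x, IsCSeq G x ∧ cost G x = c} (cost G x₀) := by
    refine ⟨⟨x₀, hx₀, rfl⟩, ?_⟩
    rintro _ ⟨x, hx, rfl⟩
    have hvertex : Injective fun v => (x.symm (.inl v) : ℕ) :=
      fun _ _ h => Sum.inl_injective (x.symm.injective (Fin.val_injective h))
    have := hσ _ hvertex
    have := hx.cost_add_vertexLoad
    omega
  rw [maxCost, hgreatest.csSup_eq]
  exact hx₀cost

end ConstructionSequence

section Degree

variable (G : SimpleGraph V) [DecidableRel G.Adj]

lemma sum_dart_fst_eq_sum_degree_mul (f : V → ℕ) :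
    ∑ d : G.Dart, f d.fst = ∑ v, G.degree v * f v := by
  classical
  rw [← sum_fiberwise univ (fun d : G.Dart => d.fst)]
  refine sum_congr rfl fun v _ => ?_
  rw [sum_congr rfl fun d hd => by rw [(mem_filter.1 hd).2], sum_const, smul_eq_mul,
    G.dart_fst_fiber_card_eq_degree]

lemma endpointSum_eq_sum_dart_fst (f : V → ℕ) :
    endpointSum G f = ∑ d : G.Dart, f d.fst := by
  classical
  rw [endpointSum, finsum_eq_sum_of_fintype, sum_set_coe (s := G.edgeSet),
    ← sum_fiberwise_of_maps_to (g := Dart.edge) (t := G.edgeSet.toFinset)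
      fun d _ => Set.mem_toFinset.2 d.edge_mem]
  refine sum_congr rfl fun e he => ?_
  induction e using Sym2.ind with
  | _ u w =>
    let d : G.Dart := ⟨(u, w), (Set.mem_toFinset.1 he : s(u, w) ∈ G.edgeSet)⟩
    rw [show s(u, w) = d.edge from rfl, Dart.edge_fiber, sum_pair d.symm_ne.symm]
    rfl

lemma endpointSum_eq_sum_degree_mul (f : V → ℕ) :
    endpointSum G f = ∑ v, G.degree v * f v := by
  rw [endpointSum_eq_sum_dart_fst, sum_dart_fst_eq_sum_degree_mul]

end Degree

section Regular

variable (G : SimpleGraph V) [DecidableRel G.Adj] {r : ℕ}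

lemma vertexLoad_of_isRegularOfDegree (h : G.IsRegularOfDegree r) (f : V → ℕ) :
    vertexLoad G f = (r + 2) * ∑ v, f v := by
  simp only [vertexLoad, endpointSum_eq_sum_degree_mul, h.degree_eq, ← mul_sum]
  ring

theorem maxCost_add_of_isRegularOfDegree (h : G.IsRegularOfDegree r) :
    maxCost G + (r + 2) * ∑ i ∈ range (Fintype.card V), i =
      2 * ∑ i ∈ range (numElts G), i := by
  have hload := vertexLoad_of_isRegularOfDegree G h
  have key := maxCost_add_vertexLoad_eq (G := G) (Fintype.equivFin V) fun f hf => by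
    rw [hload, hload, sum_val_equiv]
    exact Nat.mul_le_mul_left _ (sum_range_card_le_sum_of_injective hf)
  rwa [hload, sum_val_equiv] at key

lemma mul_card_eq_two_mul_card_edgeSet (h : G.IsRegularOfDegree r) :
    r * Fintype.card V = 2 * Nat.card G.edgeSet := by
  have := G.sum_degrees_eq_twice_card_edges
  simp only [h.degree_eq, sum_const, card_univ, smul_eq_mul] at this
  rw [mul_comm, this, edgeFinset_card, Nat.card_eq_fintype_card]

end Regular

section Sum

variable {V₁ V₂ : Type*} [Fintype V₁] [Fintype V₂] (G₁ : SimpleGraph V₁) (G₂ : SimpleGraph V₂)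

lemma numElts_sum : numElts (G₁ ⊕g G₂) = numElts G₁ + numElts G₂ := by
  rw [numElts, numElts, numElts, Fintype.card_sum,
    Nat.card_congr (edgeSetSumEquiv (G := G₁) (H := G₂)), Nat.card_sum]
  ring

lemma endpointSum_sum (f : V₁ ⊕ V₂ → ℕ) :
    endpointSum (G₁ ⊕g G₂) f = endpointSum G₁ (f ∘ .inl) + endpointSum G₂ (f ∘ .inr) := by
  classical
  simp only [endpointSum, finsum_eq_sum_of_fintype]
  rw [← Equiv.sum_comp (edgeSetSumEquiv (G := G₁) (H := G₂)).symm, Fintype.sum_sum_type]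
  congr 1
  · refine sum_congr rfl fun ⟨e, he⟩ _ => ?_
    induction e using Sym2.ind with
    | _ u w => rfl
  · refine sum_congr rfl fun ⟨e, he⟩ _ => ?_
    induction e using Sym2.ind with
    | _ u w => rfl

lemma vertexLoad_sum (f : V₁ ⊕ V₂ → ℕ) :
    vertexLoad (G₁ ⊕g G₂) f = vertexLoad G₁ (f ∘ .inl) + vertexLoad G₂ (f ∘ .inr) := by
  rw [vertexLoad, vertexLoad, vertexLoad, endpointSum_sum, Fintype.sum_sum_type]
  simp only [comp_apply]
  ring

theorem maxCost_sum_add_of_isRegularOfDegree [DecidableRel G₁.Adj] [DecidableRel G₂.Adj]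
    {r₁ r₂ : ℕ} (h₁ : G₁.IsRegularOfDegree r₁) (h₂ : G₂.IsRegularOfDegree r₂) (hr : r₂ ≤ r₁) :
    maxCost (G₁ ⊕g G₂) + ((r₁ + 2) * ∑ i ∈ range (Fintype.card V₁), i +
      (r₂ + 2) * (Fintype.card V₁ * Fintype.card V₂ + ∑ i ∈ range (Fintype.card V₂), i)) =
      2 * ∑ i ∈ range (numElts (G₁ ⊕g G₂)), i := by
  have hload (f : V₁ ⊕ V₂ → ℕ) : vertexLoad (G₁ ⊕g G₂) f =
      (r₁ + 2) * ∑ v, f (.inl v) + (r₂ + 2) * ∑ v, f (.inr v) := by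
    rw [vertexLoad_sum, vertexLoad_of_isRegularOfDegree G₁ h₁,
      vertexLoad_of_isRegularOfDegree G₂ h₂]
    rfl
  let σ : V₁ ⊕ V₂ ≃ Fin (Fintype.card (V₁ ⊕ V₂)) :=
    ((Fintype.equivFin V₁).sumCongr (Fintype.equivFin V₂)).trans
      (finSumFinEquiv.trans (finCongr Fintype.card_sum.symm))
  have hσ₁ : ∑ v, (σ (.inl v) : ℕ) = ∑ i ∈ range (Fintype.card V₁), i :=
    sum_val_equiv (Fintype.equivFin V₁)
  have hσ₂ : ∑ v, (σ (.inr v) : ℕ) =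
      Fintype.card V₁ * Fintype.card V₂ + ∑ i ∈ range (Fintype.card V₂), i := by
    rw [← sum_val_equiv (Fintype.equivFin V₂)]
    simp [σ, sum_add_distrib, mul_comm]
  have key := maxCost_add_vertexLoad_eq (G := G₁ ⊕g G₂) σ fun f hf => by
    have hA := sum_range_card_le_sum_of_injective (hf.comp Sum.inl_injective)
    have hAB := sum_range_card_le_sum_of_injective hf
    rw [Fintype.sum_sum_type, Fintype.card_sum, sum_range_id_add] at hAB
    simp only [hload, hσ₁, hσ₂, comp_apply] at hA ⊢
    -- `(r₁ + 2) A + (r₂ + 2) B = (r₁ - r₂) A + (r₂ + 2) (A + B)`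
    nlinarith
  rwa [hload, hσ₁, hσ₂] at key

end Sum

/-- Maximum construction cost of the disjoint union of regular graphs of distinct
degrees: `ν*(G₁ ⊔ G₂) = ν*(G₁) + ν*(G₂) + 2q₁(p₂ + q₂)` when `r₁ > r₂`. -/
theorem maxCost_sum_regular {V₁ V₂ : Type*} [Fintype V₁] [Fintype V₂]
    (G₁ : SimpleGraph V₁) (G₂ : SimpleGraph V₂)
    [DecidableRel G₁.Adj] [DecidableRel G₂.Adj] (r₁ r₂ : ℕ)
    (h₁ : G₁.IsRegularOfDegree r₁) (h₂ : G₂.IsRegularOfDegree r₂) (hr : r₂ < r₁) :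
    maxCost (G₁ ⊕g G₂) =
      maxCost G₁ + maxCost G₂ +
        2 * Nat.card G₁.edgeSet * (Fintype.card V₂ + Nat.card G₂.edgeSet) := by
  have hsum := maxCost_sum_add_of_isRegularOfDegree G₁ G₂ h₁ h₂ hr.le
  have hG₁ := maxCost_add_of_isRegularOfDegree G₁ h₁
  have hG₂ := maxCost_add_of_isRegularOfDegree G₂ h₂
  have hedges := congrArg (Fintype.card V₁ * ·) (mul_card_eq_two_mul_card_edgeSet G₂ h₂)
  rw [numElts_sum, sum_range_id_add] at hsum
  simp only [numElts] at hsum hG₁ hG₂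
  linarith

end ConsCost
end

section
/- The minimum construction cost of the complete graph K_n is ν_*(K_n) = (n−1)n(n+1)(n+4)/12 for all n ≥ 1. -/
namespace ConsCost

variable {V : Type*} [Fintype V]

/-!
Write `pos` for positions (counted from `0`) in a construction sequence of a `d`-regular graph
with `N = p + q` elements. Summing `2 pos e - pos u - pos w` over the edges gives
`cost + (d + 2) · Σ_v pos v = 2 · Σ_{i < N} i`, so minimising the cost means maximising the
total vertex position. If `r` vertices precede `v`, every element before `v` is one of these
vertices or an edge between two of them, so `pos v ≤ C(r + 1, 2)`, and
`Σ_v pos v ≤ Σ_{r < p} C(r + 1, 2) = C(p + 1, 3)`. For `K_n` the bound is attained by the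
sequence listing each vertex followed by its edges to all earlier vertices.
-/

open Finset SimpleGraph

theorem sum_edgeFinset_lift_add_eq_sum_degree_smul {M : Type*} [AddCommMonoid M]
    [DecidableEq V] (G : SimpleGraph V) [DecidableRel G.Adj] (f : V → M) :
    ∑ e ∈ G.edgeFinset, Sym2.lift ⟨fun u w => f u + f w, fun _ _ => add_comm _ _⟩ e =
      ∑ v, G.degree v • f v := by
  calc ∑ e ∈ G.edgeFinset, Sym2.lift ⟨fun u w => f u + f w, fun _ _ => add_comm _ _⟩ e
      = ∑ e ∈ G.edgeFinset, ∑ d : G.Dart with d.edge = e, f d.fst := by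
        refine sum_congr rfl fun e he => ?_
        induction e using Sym2.ind with
        | _ u w =>
          let d : G.Dart := ⟨(u, w), G.mem_edgeFinset.1 he⟩
          rw [show s(u, w) = d.edge from rfl, d.edge_fiber, sum_pair d.symm_ne.symm]
          rfl
    _ = ∑ d : G.Dart, f d.fst :=
        sum_fiberwise_of_maps_to (fun d _ => G.mem_edgeFinset.2 d.edge_mem) _
    _ = ∑ v, ∑ d : G.Dart with d.fst = v, f d.fst := (sum_fiberwise _ _ _).symm
    _ = ∑ v, G.degree v • f v := by
        refine sum_congr rfl fun v _ => ?_
        rw [sum_congr rfl fun d hd => congrArg f (mem_filter.1 hd).2, sum_const,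
          dart_fst_fiber_card_eq_degree]

theorem sum_range_succ_choose_two (n : ℕ) :
    ∑ k ∈ range n, (k + 1).choose 2 = (n + 1).choose 3 := by
  induction n with
  | zero => rfl
  | succ n ih => rw [sum_range_succ, ih, Nat.choose_succ_succ' (n + 1) 2, add_comm]

section Rank

variable {α : Type*} [LinearOrder α] {p : V → α}

theorem sum_comp_card_filter_lt {M : Type*} [AddCommMonoid M] (hp : Function.Injective p)
    (g : ℕ → M) : ∑ v, g #{w | p w < p v} = ∑ k ∈ range (Fintype.card V), g k := by
  set rank : V → ℕ := fun v => #{w | p w < p v}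
  have rank_lt_rank {a b : V} (hab : p a < p b) : rank a < rank b := by
    refine card_lt_card ⟨fun w hw => ?_, fun hsub => ?_⟩
    · simp only [mem_filter, mem_univ, true_and] at hw ⊢
      exact hw.trans hab
    · exact lt_irrefl _ (mem_filter.1 (hsub (by simpa using hab))).2
  have rank_injective : Function.Injective rank := fun a b hab => by
    rcases lt_trichotomy (p a) (p b) with h | h | h
    · exact absurd hab (rank_lt_rank h).ne
    · exact hp h
    · exact absurd hab (rank_lt_rank h).ne'
  have image_rank : univ.image rank = range (Fintype.card V) := by
    refine eq_of_subset_of_card_le (fun k hk => ?_) ?_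
    · obtain ⟨v, -, rfl⟩ := mem_image.1 hk
      refine mem_range.2 (card_lt_univ_of_notMem (x := v) ?_)
      simp
    · rw [card_image_of_injective _ rank_injective, card_range, card_univ]
  rw [← image_rank, sum_image fun a _ b _ h => rank_injective h]

end Rank

theorem _root_.Sym2.inf_lt_sup {α : Type*} [LinearOrder α] {e : Sym2 α} (he : ¬e.IsDiag) :
    e.inf < e.sup := by
  induction e using Sym2.ind with
  | _ a b => exact min_lt_max.2 (Sym2.mk_isDiag_iff.not.1 he)

theorem _root_.Sym2.mem_iff_eq_inf_or_eq_sup {α : Type*} [LinearOrder α] {e : Sym2 α} {v : α} :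
    v ∈ e ↔ v = e.inf ∨ v = e.sup := by
  induction e using Sym2.ind with
  | _ a b =>
    rcases le_total a b with h | h <;> simp [h, or_comm]

section Positions

variable {G : SimpleGraph V} (x : Fin (numElts G) ≃ V ⊕ G.edgeSet)

def vertexPos (v : V) : ℕ := x.symm (.inl v)

def edgePos (e : G.edgeSet) : ℕ := x.symm (.inr e)

theorem sum_vertexPos_add_sum_edgePos [Fintype G.edgeSet] :
    ∑ v, vertexPos x v + ∑ e, edgePos x e = ∑ i ∈ range (numElts G), i := by
  rw [← Fin.sum_univ_eq_sum_range, ← Equiv.sum_comp x.symm, Fintype.sum_sum_type]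
  rfl

theorem edgeCost_add_lift (hx : IsCSeq G x) (e : G.edgeSet) :
    edgeCost G x e +
        Sym2.lift ⟨fun u w => vertexPos x u + vertexPos x w, fun _ _ => add_comm _ _⟩ e.1 =
      2 * edgePos x e := by
  obtain ⟨e, he⟩ := e
  induction e using Sym2.ind with
  | _ u w =>
    have hu := hx ⟨s(u, w), he⟩ u (Sym2.mem_mk_left u w)
    have hw := hx ⟨s(u, w), he⟩ w (Sym2.mem_mk_right u w)
    simp only [edgeCost, Sym2.lift_mk, Fin.lt_def] at hu hw ⊢
    unfold vertexPos edgePos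
    omega

theorem cost_add_sum_degree_mul [DecidableEq V] [DecidableRel G.Adj] (hx : IsCSeq G x) :
    cost G x + ∑ v, G.degree v * vertexPos x v = 2 * ∑ e, edgePos x e := by
  rw [cost, finsum_eq_sum_of_fintype, mul_sum,
    ← sum_congr rfl fun e _ => edgeCost_add_lift x hx e, sum_add_distrib]
  simp_rw [← smul_eq_mul, ← sum_edgeFinset_lift_add_eq_sum_degree_smul]
  rw [edgeFinset, sum_set_coe]

theorem exists_equiv_val_symm_eq [DecidableEq V] [DecidableRel G.Adj]
    {p : V ⊕ G.edgeSet → ℕ} (hp : Function.Injective p) (hlt : ∀ z, p z < numElts G) :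
    ∃ x : Fin (numElts G) ≃ V ⊕ G.edgeSet, ∀ z, (x.symm z : ℕ) = p z := by
  let F : V ⊕ G.edgeSet → Fin (numElts G) := fun z => ⟨p z, hlt z⟩
  have hF : Function.Bijective F := by
    refine Function.Injective.bijective_of_nat_card_le (fun a b h => hp (Fin.val_eq_of_eq h)) ?_
    rw [Nat.card_sum, Nat.card_eq_fintype_card (α := Fin _), Fintype.card_fin, numElts,
      Nat.card_eq_fintype_card (α := V)]
  exact ⟨(Equiv.ofBijective F hF).symm, fun z => rfl⟩

end Positions

section UpperBound

variable {G : SimpleGraph V}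

omit [Fintype V] in
def toSym2 : V ⊕ G.edgeSet → Sym2 V := Sum.elim Sym2.diag Subtype.val

omit [Fintype V] in
theorem toSym2_injective : Function.Injective (toSym2 (G := G)) :=
  Sym2.diag_injective.sumElim Subtype.val_injective fun v e h =>
    G.not_isDiag_of_mem_edgeSet e.2 (h ▸ Sym2.diag_isDiag v)

variable [DecidableRel G.Adj] (x : Fin (numElts G) ≃ V ⊕ G.edgeSet)

theorem vertexPos_le_choose (hx : IsCSeq G x) (v : V) :
    vertexPos x v ≤ (#{w | vertexPos x w < vertexPos x v} + 1).choose 2 := by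
  have card_before : vertexPos x v = #{z | x.symm z < x.symm (.inl v)} := by
    rw [vertexPos, ← Fin.card_Iio]
    exact card_equiv x (by simp)
  rw [← card_sym2]
  refine card_before.trans_le
    (card_le_card_of_injOn toSym2 (fun z hz => ?_) toSym2_injective.injOn)
  simp only [coe_filter, mem_univ, true_and, Set.mem_ofPred_eq] at hz
  rw [mem_coe]
  rcases z with w | e
  · rw [toSym2, Sum.elim_inl, Sym2.diag, mk_mem_sym2_iff, and_self]
    exact mem_filter.2 ⟨mem_univ w, hz⟩
  · rw [toSym2, Sum.elim_inr, mem_sym2_iff]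
    intro w hw
    exact mem_filter.2 ⟨mem_univ w, (hx e w hw).trans hz⟩

theorem sum_vertexPos_le (hx : IsCSeq G x) :
    ∑ v, vertexPos x v ≤ (Fintype.card V + 1).choose 3 := by
  have hinj : Function.Injective (vertexPos x) := fun a b h =>
    Sum.inl_injective (x.symm.injective (Fin.ext h))
  calc ∑ v, vertexPos x v ≤ ∑ v, (#{w | vertexPos x w < vertexPos x v} + 1).choose 2 :=
        sum_le_sum fun v _ => vertexPos_le_choose x hx v
    _ = ∑ k ∈ range (Fintype.card V), (k + 1).choose 2 :=
        sum_comp_card_filter_lt hinj fun k => (k + 1).choose 2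
    _ = (Fintype.card V + 1).choose 3 := sum_range_succ_choose_two _

end UpperBound

section Regular

variable [DecidableEq V] {G : SimpleGraph V} [DecidableRel G.Adj] {d : ℕ}

theorem cost_add_mul_sum_vertexPos (hG : G.IsRegularOfDegree d)
    {x : Fin (numElts G) ≃ V ⊕ G.edgeSet} (hx : IsCSeq G x) :
    cost G x + (d + 2) * ∑ v, vertexPos x v = numElts G * (numElts G - 1) := by
  have h_cost := cost_add_sum_degree_mul x hx
  simp only [hG _, ← mul_sum] at h_cost
  have h_total := sum_vertexPos_add_sum_edgePos x
  have h_gauss := sum_range_id_mul_two (numElts G)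
  linarith

theorem minCost_add_mul_choose_three (hG : G.IsRegularOfDegree d)
    {x : Fin (numElts G) ≃ V ⊕ G.edgeSet} (hx : IsCSeq G x)
    (hx_max : ∑ v, vertexPos x v = (Fintype.card V + 1).choose 3) :
    minCost G + (d + 2) * (Fintype.card V + 1).choose 3 = numElts G * (numElts G - 1) := by
  have h_least : IsLeast {c | ∃ y, IsCSeq G y ∧ cost G y = c} (cost G x) := by
    refine ⟨⟨x, hx, rfl⟩, ?_⟩
    rintro _ ⟨y, hy, rfl⟩
    have hx_cost := hx_max ▸ cost_add_mul_sum_vertexPos hG hx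
    have hy_cost := cost_add_mul_sum_vertexPos hG hy
    have hy_le := Nat.mul_le_mul_left (d + 2) (sum_vertexPos_le y hy)
    omega
  rw [minCost, h_least.csInf_eq, ← hx_max]
  exact cost_add_mul_sum_vertexPos hG hx

end Regular

theorem choose_two_add_lt_choose_two {b b' j : ℕ} (hj : j ≤ b) (hb : b < b') :
    (b + 1).choose 2 + j < (b' + 1).choose 2 := by
  have h_step : (b + 2).choose 2 = (b + 1).choose 2 + (b + 1) := by
    rw [Nat.choose_succ_succ' (b + 1) 1, Nat.choose_one_right, add_comm]
  have h_mono := Nat.choose_le_choose 2 (show b + 2 ≤ b' + 1 by omega)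
  omega

theorem choose_two_add_lt_choose_two_add {b b' j j' : ℕ} (hj : j ≤ b)
    (h : b < b' ∨ b = b' ∧ j < j') : (b + 1).choose 2 + j < (b' + 1).choose 2 + j' := by
  rcases h with hb | ⟨rfl, hj'⟩
  · exact (choose_two_add_lt_choose_two hj hb).trans_le (Nat.le_add_right _ _)
  · omega

theorem eq_of_choose_two_add_eq {b b' j j' : ℕ} (hj : j ≤ b) (hj' : j' ≤ b')
    (h : (b + 1).choose 2 + j = (b' + 1).choose 2 + j') : b = b' ∧ j = j' := by
  rcases lt_trichotomy b b' with hb | rfl | hb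
  · exact absurd h (choose_two_add_lt_choose_two_add hj (.inl hb)).ne
  · omega
  · exact absurd h (choose_two_add_lt_choose_two_add hj' (.inl hb)).ne'

theorem numElts_top [DecidableEq V] :
    numElts (⊤ : SimpleGraph V) = (Fintype.card V + 1).choose 2 := by
  rw [numElts, Nat.card_eq_fintype_card, ← edgeFinset_card,
    card_edgeFinset_top_eq_card_choose_two, Nat.choose_succ_succ', Nat.choose_one_right]

section Complete

variable {n : ℕ}

/-- Position data `(b, j)` of the greedy sequence of `K_n`, which lists vertex `b` followed by
the edges from `b` to `0, …, b - 1`; it is placed at position `C(b + 1, 2) + j`. -/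
def greedyKey : Fin n ⊕ (⊤ : SimpleGraph (Fin n)).edgeSet → ℕ × ℕ :=
  Sum.elim (fun v => (v, 0)) (fun e => ((e : Sym2 (Fin n)).sup, (e : Sym2 (Fin n)).inf + 1))

theorem inf_lt_sup_of_edge (e : (⊤ : SimpleGraph (Fin n)).edgeSet) :
    ((e : Sym2 (Fin n)).inf : ℕ) < (e : Sym2 (Fin n)).sup :=
  Sym2.inf_lt_sup (not_isDiag_of_mem_edgeSet _ e.2)

theorem greedyKey_snd_le_fst (z : Fin n ⊕ (⊤ : SimpleGraph (Fin n)).edgeSet) :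
    (greedyKey z).2 ≤ (greedyKey z).1 := by
  rcases z with v | e
  · exact Nat.zero_le _
  · exact inf_lt_sup_of_edge e

theorem greedyKey_injective : Function.Injective (greedyKey (n := n)) := by
  rintro (v | e) (w | f) h <;> simp only [greedyKey, Sum.elim_inl, Sum.elim_inr, Prod.mk.injEq] at h
  · exact congrArg Sum.inl (Fin.ext h.1)
  · omega
  · omega
  · refine congrArg Sum.inr (Subtype.ext (Sym2.inf_eq_inf_and_sup_eq_sup.1 ⟨?_, ?_⟩))
    · exact Fin.ext (by omega)
    · exact Fin.ext h.1

def greedyPos (z : Fin n ⊕ (⊤ : SimpleGraph (Fin n)).edgeSet) : ℕ :=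
  ((greedyKey z).1 + 1).choose 2 + (greedyKey z).2

theorem greedyPos_injective : Function.Injective (greedyPos (n := n)) := fun a b h => by
  obtain ⟨h1, h2⟩ := eq_of_choose_two_add_eq (greedyKey_snd_le_fst a) (greedyKey_snd_le_fst b) h
  exact greedyKey_injective (Prod.ext h1 h2)

theorem greedyPos_lt_numElts (z : Fin n ⊕ (⊤ : SimpleGraph (Fin n)).edgeSet) :
    greedyPos z < numElts (⊤ : SimpleGraph (Fin n)) := by
  have h_fst : (greedyKey z).1 < n := by
    rcases z with v | e
    · exact v.2
    · exact (e : Sym2 (Fin n)).sup.2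
  rw [numElts_top, Fintype.card_fin]
  exact choose_two_add_lt_choose_two (greedyKey_snd_le_fst z) h_fst

theorem exists_isCSeq_top_sum_vertexPos_eq :
    ∃ x : Fin (numElts (⊤ : SimpleGraph (Fin n))) ≃
        Fin n ⊕ (⊤ : SimpleGraph (Fin n)).edgeSet,
      IsCSeq ⊤ x ∧ ∑ v, vertexPos x v = (n + 1).choose 3 := by
  obtain ⟨x, hx⟩ := exists_equiv_val_symm_eq greedyPos_injective greedyPos_lt_numElts
  refine ⟨x, fun e v hv => ?_, ?_⟩
  · rw [Fin.lt_def, hx, hx]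
    refine choose_two_add_lt_choose_two_add (Nat.zero_le _) ?_
    rcases Sym2.mem_iff_eq_inf_or_eq_sup.1 hv with rfl | rfl
    · exact .inl (inf_lt_sup_of_edge e)
    · exact .inr ⟨rfl, Nat.succ_pos _⟩
  · simp only [vertexPos, hx]
    rw [← sum_range_succ_choose_two, ← Fin.sum_univ_eq_sum_range]
    rfl

end Complete

theorem minCost_completeGraph_general (n : ℕ) :
    12 * minCost (⊤ : SimpleGraph (Fin n)) = (n - 1) * n * (n + 1) * (n + 4) := by
  obtain ⟨x, hx, hx_max⟩ := exists_isCSeq_top_sum_vertexPos_eq (n := n)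
  have h := minCost_add_mul_choose_three IsRegularOfDegree.top hx
    (by rwa [Fintype.card_fin])
  rw [numElts_top, Fintype.card_fin] at h
  rcases n with _ | m
  · simpa [Nat.choose_eq_zero_of_lt] using h
  have h2 : (m + 2).choose 2 * 2 = (m + 2) * (m + 1) := by
    rw [← Nat.add_one_mul_choose_eq, Nat.choose_one_right]
  have h3 : (m + 2).choose 3 * 3 * 2 = (m + 2) * (m + 1) * m := by
    rw [← Nat.add_one_mul_choose_eq, mul_assoc, ← Nat.add_one_mul_choose_eq,
      Nat.choose_one_right]
    ring
  have h_pos : 1 ≤ (m + 2).choose 2 := Nat.choose_pos (by omega)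
  simp only [Nat.add_sub_cancel] at h ⊢
  zify [h_pos] at h h2 h3 ⊢
  linear_combination 12 * h - 2 * ((m : ℤ) + 2) * h3
    + (3 * (2 * ((m + 2).choose 2 : ℤ) + (m + 2) * (m + 1)) - 6) * h2

/-- `ν_*(K_n) = (n−1)n(n+1)(n+4)/12` for `n ≥ 1`. -/
theorem minCost_completeGraph (n : ℕ) (hn : 1 ≤ n) :
    12 * minCost (⊤ : SimpleGraph (Fin n)) = (n - 1) * n * (n + 1) * (n + 4) :=
  minCost_completeGraph_general n

end ConsCost
end
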